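/- b(R_ω) = add(M) and d(R_ω) = cof(M), where M is the meager ideal on 2^ω (equivalently on ω^ω). -/

import Mathlib

/-!
Both equalities come from Tukey connections into sequential compositions, `R_ω ⪯ M ; M` and
`M ⪯ R_ω ; R_ω`, where `M = ⟨meagre sets, meagre sets, ⊆⟩` has `𝔟(M) = add(M)` and
`𝔡(M) = cof(M)`: a connection `A ⪯ B ; B` gives `𝔟(B) ≤ 𝔟(A)`, and `𝔡(A) ≤ 𝔡(B)² = 𝔡(B)` when
`𝔡(B)` is infinite.

Both connections rest on one half of Bartoszyński's characterization: a meagre subset of a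
finitely branching box `∏ k, [0, G k]` consists of points that differ from a fixed `x` of the box
on almost every interval of some interval partition `J`.

`R_ω ⪯ M ; M`. A meagre set containing all `y ≤* max_{i ≤ ·} f i` yields a bound `G ≥* f`. A
meagre set containing all `y` with `y ⊓ G` eventually different from `f ⊓ G` then yields `(J, x)`,
`x ≤ G`; testing `x` against such a `y ⊓ G` equal to `x` off the matches of `x` with `f ⊓ G`
shows that `x` meets `f ⊓ G`, hence `f`, on almost every interval of `J`.

`M ⪯ R_ω ; R_ω`. The unary code embeds `ω^ω` into `2^ω` and preserves meagreness both ways, so a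
meagre `A` yields `(J, x)` in `2^ω`. A first answer `p` to `J` bounds the growth of `J`, so that
the blocks of `x` on the intervals of `J` can be placed in windows that depend on `p` only; a
second answer predicting these blocks defines a single meagre set containing `A`.
-/

open Cardinal Set Filter

/-- A relational system `⟨X, Y, R⟩`. -/
structure RelSys : Type 1 where
  X : Type
  Y : Type
  R : X → Y → Prop

/-- The bounding number `𝔟(A)` of a relational system. -/
noncomputable def bnum (A : RelSys) : Cardinal :=
  sInf {c | ∃ F : Set A.X, c = #↥F ∧ ∀ y, ∃ x ∈ F, ¬ A.R x y}

/-- The dominating number `𝔡(A)` of a relational system. -/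
noncomputable def dnum (A : RelSys) : Cardinal :=
  sInf {c | ∃ D : Set A.Y, c = #↥D ∧ ∀ x, ∃ y ∈ D, A.R x y}

/-- An interval partition of `ω`, with `I_n = [e n, e (n+1))`. -/
structure IntPart : Type where
  e : ℕ → ℕ
  zero : e 0 = 0
  mono : StrictMono e

/-- `f ⊏• (I, h)`. -/
def sqb (I : IntPart) (f h : ℕ → ℕ) : Prop :=
  ∀ᶠ n in atTop, ∃ k, I.e n ≤ k ∧ k < I.e (n + 1) ∧ f k = h k

/-- The relational system `R_ω = ⟨ω^ω, 𝕀 × ω^ω, ⊏•⟩`. -/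
def Romega : RelSys := ⟨ℕ → ℕ, IntPart × (ℕ → ℕ), fun f p => sqb p.1 f p.2⟩

/-- The meager ideal on the Baire space `ω^ω`. -/
def MIdeal : Set (Set (ℕ → ℕ)) := {A | IsMeagre A}

/-- The additivity number of a family of sets. -/
noncomputable def addIdeal {α : Type*} (I : Set (Set α)) : Cardinal :=
  sInf {c | ∃ F : Set (Set α), F ⊆ I ∧ c = #↥F ∧ ⋃₀ F ∉ I}

/-- The cofinality number of a family of sets. -/
noncomputable def cofIdeal {α : Type*} (I : Set (Set α)) : Cardinal :=
  sInf {c | ∃ F : Set (Set α), F ⊆ I ∧ c = #↥F ∧ ∀ A ∈ I, ∃ B ∈ F, A ⊆ B}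

/-! ## Relational systems -/

namespace RelSys

variable {A B : RelSys}

def IsUnbounded (A : RelSys) (F : Set A.X) : Prop := ∀ y, ∃ x ∈ F, ¬ A.R x y

def IsDominating (A : RelSys) (D : Set A.Y) : Prop := ∀ x, ∃ y ∈ D, A.R x y

lemma bnum_le_mk {F : Set A.X} (hF : A.IsUnbounded F) : bnum A ≤ #F :=
  csInf_le' ⟨F, rfl, hF⟩

lemma dnum_le_mk {D : Set A.Y} (hD : A.IsDominating D) : dnum A ≤ #D :=
  csInf_le' ⟨D, rfl, hD⟩

lemma aleph0_le_dnum (hA : A.IsDominating univ) (h : ∀ D, A.IsDominating D → D.Infinite) :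
    ℵ₀ ≤ dnum A :=
  le_csInf ⟨_, univ, rfl, hA⟩ fun _ ⟨D, hc, hD⟩ => hc ▸ Cardinal.infinite_iff.1 (h D hD).to_subtype

lemma exists_isUnbounded_mk_eq_bnum (hA : A.IsUnbounded univ) :
    ∃ F, A.IsUnbounded F ∧ #F = bnum A := by
  obtain ⟨F, hF, hFA⟩ := csInf_mem (s := {c | ∃ F : Set A.X, c = #F ∧ A.IsUnbounded F})
    ⟨_, univ, rfl, hA⟩
  exact ⟨F, hFA, hF.symm⟩

lemma exists_isDominating_mk_eq_dnum (hB : ℵ₀ ≤ dnum B) :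
    ∃ D, B.IsDominating D ∧ #D = dnum B := by
  have hne : {c | ∃ D : Set B.Y, c = #D ∧ B.IsDominating D}.Nonempty := by
    by_contra h
    change ℵ₀ ≤ sInf {c | ∃ D : Set B.Y, c = #D ∧ B.IsDominating D} at hB
    rw [not_nonempty_iff_eq_empty.1 h, Cardinal.sInf_empty] at hB
    exact aleph0_ne_zero (le_zero_iff.1 hB)
  obtain ⟨D, hD, hDB⟩ := csInf_mem hne
  exact ⟨D, hDB, hD.symm⟩

/-- A Tukey connection from `A` into the sequential composition `B ; B`: an `A`-challenge is
answered by two successive rounds of `B`, the second challenge depending on the first answer. -/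
structure SeqTukey (A B : RelSys) where
  first : A.X → B.X
  second : B.Y → A.X → B.X
  out : B.Y → B.Y → A.Y
  spec : ∀ x y₁ y₂, B.R (first x) y₁ → B.R (second y₁ x) y₂ → A.R x (out y₁ y₂)

theorem SeqTukey.bnum_le (φ : SeqTukey A B) (hA : A.IsUnbounded univ) : bnum B ≤ bnum A := by
  obtain ⟨F, hF, hFA⟩ := exists_isUnbounded_mk_eq_bnum hA
  rw [← hFA]
  by_cases h₁ : B.IsUnbounded (range fun x : F => φ.first x)
  · exact (bnum_le_mk h₁).trans mk_range_le
  obtain ⟨y₁, hy₁⟩ : ∃ y₁, ∀ x ∈ F, B.R (φ.first x) y₁ := by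
    simpa [IsUnbounded] using h₁
  by_cases h₂ : B.IsUnbounded (range fun x : F => φ.second y₁ x)
  · exact (bnum_le_mk h₂).trans mk_range_le
  obtain ⟨y₂, hy₂⟩ : ∃ y₂, ∀ x ∈ F, B.R (φ.second y₁ x) y₂ := by
    simpa [IsUnbounded] using h₂
  obtain ⟨x, hx, hxR⟩ := hF (φ.out y₁ y₂)
  exact (hxR (φ.spec x y₁ y₂ (hy₁ x hx) (hy₂ x hx))).elim

theorem SeqTukey.dnum_le (φ : SeqTukey A B) (hB : ℵ₀ ≤ dnum B) : dnum A ≤ dnum B := by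
  obtain ⟨D, hD, hDB⟩ := exists_isDominating_mk_eq_dnum hB
  have hdom : A.IsDominating (range fun p : D × D => φ.out p.1 p.2) := by
    intro x
    obtain ⟨y₁, hy₁, h₁⟩ := hD (φ.first x)
    obtain ⟨y₂, hy₂, h₂⟩ := hD (φ.second y₁ x)
    exact ⟨_, ⟨(⟨y₁, hy₁⟩, ⟨y₂, hy₂⟩), rfl⟩, φ.spec x y₁ y₂ h₁ h₂⟩
  calc dnum A ≤ #(D × D) := (dnum_le_mk hdom).trans mk_range_le
    _ = dnum B := by rw [mk_prod, lift_id, hDB, mul_eq_self hB]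

def ofFamily {α : Type} (I : Set (Set α)) : RelSys := ⟨I, I, fun A B => (A : Set α) ⊆ B⟩

lemma addIdeal_eq_bnum_ofFamily {α : Type} {I : Set (Set α)}
    (hI : ∀ A ∈ I, ∀ B ⊆ A, B ∈ I) : addIdeal I = bnum (ofFamily I) := by
  unfold addIdeal bnum
  congr 1
  ext c
  constructor
  · rintro ⟨F, hFI, rfl, hF⟩
    refine ⟨Subtype.val ⁻¹' F, (mk_preimage_of_injective_of_subset_range _ _
      Subtype.val_injective (by simpa using hFI)).symm, fun B => ?_⟩
    by_contra! h
    exact hF (hI _ B.2 _ (sUnion_subset fun A hA => h ⟨A, hFI hA⟩ hA))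
  · rintro ⟨(F : Set I), rfl, hF⟩
    refine ⟨Subtype.val '' F, by simp, (mk_image_eq Subtype.val_injective).symm, fun h => ?_⟩
    obtain ⟨A, hA, hAU⟩ := hF ⟨_, h⟩
    exact hAU (subset_sUnion_of_mem (mem_image_of_mem _ hA))

lemma cofIdeal_eq_dnum_ofFamily {α : Type} (I : Set (Set α)) :
    cofIdeal I = dnum (ofFamily I) := by
  unfold cofIdeal dnum
  congr 1
  ext c
  constructor
  · rintro ⟨F, hFI, rfl, hF⟩
    refine ⟨Subtype.val ⁻¹' F, (mk_preimage_of_injective_of_subset_range _ _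
      Subtype.val_injective (by simpa using hFI)).symm, fun A => ?_⟩
    obtain ⟨B, hB, hAB⟩ := hF _ A.2
    exact ⟨⟨B, hFI hB⟩, hB, hAB⟩
  · rintro ⟨(F : Set I), rfl, hF⟩
    refine ⟨Subtype.val '' F, by simp, (mk_image_eq Subtype.val_injective).symm, fun A hA => ?_⟩
    obtain ⟨B, hB, hAB⟩ := hF ⟨A, hA⟩
    exact ⟨_, mem_image_of_mem Subtype.val hB, hAB⟩

end RelSys

lemma romega_isUnbounded_univ : Romega.IsUnbounded univ := fun p =>
  ⟨fun k => p.2 k + 1, mem_univ _, fun h => by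
    obtain ⟨n, k, -, -, hk⟩ := h.exists
    exact Nat.succ_ne_self _ hk⟩

lemma aleph0_le_dnum_romega : ℵ₀ ≤ dnum Romega := by
  refine RelSys.aleph0_le_dnum (fun f => ⟨(⟨id, rfl, strictMono_id⟩, f), mem_univ _,
    Eventually.of_forall fun n => ⟨n, le_rfl, Nat.lt_succ_self n, rfl⟩⟩) fun D hD hfin => ?_
  obtain ⟨p, hp, hfp⟩ := hD fun k => hfin.toFinset.sup (fun q : IntPart × (ℕ → ℕ) => q.2 k) + 1
  obtain ⟨n, k, -, -, hk⟩ := hfp.exists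
  have : p.2 k ≤ hfin.toFinset.sup fun q : IntPart × (ℕ → ℕ) => q.2 k :=
    Finset.le_sup (f := fun q : IntPart × (ℕ → ℕ) => q.2 k) (hfin.mem_toFinset.2 hp)
  simp only at hk
  omega

/-! ## Cylinders and meagre sets in Baire space -/

theorem exists_seq_of_forall_exists {α : Type*} {P : α → Prop} {Q : ℕ → α → α → Prop} {a : α}
    (ha : P a) (h : ∀ n a, P a → ∃ b, P b ∧ Q n a b) :
    ∃ s : ℕ → α, s 0 = a ∧ ∀ n, P (s n) ∧ Q n (s n) (s (n + 1)) := by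
  choose g hg using h
  let s : ℕ → {a // P a} := fun n =>
    Nat.rec ⟨a, ha⟩ (fun n b => ⟨g n b b.2, (hg n b b.2).1⟩) n
  exact ⟨fun n => (s n).1, rfl, fun n => ⟨(s n).2, (hg n _ (s n).2).2⟩⟩

lemma piecewise_Iio_of_lt {β : ℕ → Type*} {f g : ∀ n, β n} {a i : ℕ} (h : i < a) :
    (Iio a).piecewise f g i = f i :=
  piecewise_eq_of_mem _ _ _ (mem_Iio.2 h)

lemma piecewise_Iio_of_not_lt {β : ℕ → Type*} {f g : ∀ n, β n} {a i : ℕ} (h : ¬ i < a) :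
    (Iio a).piecewise f g i = g i :=
  piecewise_eq_of_notMem _ _ _ (mt mem_Iio.1 h)

namespace PiNat

variable {E : ℕ → Type*}

lemma cylinder_subset_cylinder {s t : ∀ n, E n} {L L' : ℕ} (h : L ≤ L')
    (ht : t ∈ cylinder s L) : cylinder t L' ⊆ cylinder s L :=
  (cylinder_anti t h).trans (mem_cylinder_iff_eq.1 ht).le

lemma piecewise_Iio_mem_cylinder {f g : ∀ n, E n} {a : ℕ} : (Iio a).piecewise f g ∈ cylinder f a :=
  fun _ hi => piecewise_Iio_of_lt hi

lemma exists_forall_mem_cylinder {s : ℕ → ∀ n, E n} {L : ℕ → ℕ} (hL : StrictMono L)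
    (hs : ∀ n, s (n + 1) ∈ cylinder (s n) (L n)) :
    ∃ y, (∀ n, y ∈ cylinder (s n) (L n)) ∧ ∀ i, y i = s (i + 1) i := by
  have hext : ∀ n m, n ≤ m → s m ∈ cylinder (s n) (L n) := by
    intro n m hnm
    induction m, hnm using Nat.le_induction with
    | base => exact self_mem_cylinder _ _
    | succ m hnm ih => exact cylinder_subset_cylinder (hL.monotone hnm) ih (hs m)
  refine ⟨fun i => s (i + 1) i, fun n i hi => ?_, fun _ => rfl⟩
  have hi' : i < L (i + 1) := (Nat.lt_succ_self i).trans_le (hL.id_le _)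
  exact (hext (i + 1) (max n (i + 1)) (le_max_right _ _) i hi').symm.trans
    (hext n (max n (i + 1)) (le_max_left _ _) i hi)

end PiNat

open PiNat

lemma exists_cylinder_subset {U : Set (ℕ → ℕ)} (hU : IsOpen U) {y : ℕ → ℕ} (hy : y ∈ U) :
    ∃ L, cylinder y L ⊆ U := by
  obtain ⟨_, ⟨x, L, rfl⟩, hyx, hsub⟩ :=
    (isTopologicalBasis_cylinders fun _ => ℕ).exists_subset_of_mem_open hy hU
  exact ⟨L, (mem_cylinder_iff_eq.1 hyx).le.trans hsub⟩

lemma isNowhereDense_of_exists_disjoint_cylinder {C : Set (ℕ → ℕ)}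
    (h : ∀ s L, ∃ t ∈ cylinder s L, ∃ L', Disjoint (cylinder t L') C) : IsNowhereDense C := by
  refine eq_empty_of_forall_notMem fun y hy => ?_
  obtain ⟨L, hL⟩ := exists_cylinder_subset isOpen_interior hy
  obtain ⟨t, ht, L', hdisj⟩ := h y L
  have htC : t ∈ closure C := interior_subset (hL ht)
  exact (hdisj.closure_right (isOpen_cylinder _ t L')).notMem_of_mem_left
    (self_mem_cylinder t L') htC

lemma IsNowhereDense.exists_disjoint_cylinder {C : Set (ℕ → ℕ)} (hC : IsClosed C)
    (hN : IsNowhereDense C) (s : ℕ → ℕ) (L : ℕ) :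
    ∃ t ∈ cylinder s L, ∃ L' ≥ L, Disjoint (cylinder t L') C := by
  have hnot : ¬ cylinder s L ⊆ C := fun hsub => by
    have := interior_maximal hsub (isOpen_cylinder _ s L) (self_mem_cylinder s L)
    rwa [← hC.closure_eq, hN] at this
  obtain ⟨t, ht, htC⟩ := not_subset.1 hnot
  obtain ⟨L', hL'⟩ := exists_cylinder_subset hC.isOpen_compl htC
  refine ⟨t, ht, max L L', le_max_left _ _, ?_⟩
  rw [← compl_compl C]
  exact disjoint_compl_right_iff_subset.2 ((cylinder_anti t (le_max_right _ _)).trans hL')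

lemma IsMeagre.exists_isClosed_isNowhereDense_cover {X : Type*} [TopologicalSpace X]
    [BaireSpace X] {B : Set X} (hB : IsMeagre B) :
    ∃ F : ℕ → Set X, (∀ n, IsClosed (F n) ∧ IsNowhereDense (F n)) ∧ B ⊆ ⋃ n, F n := by
  obtain ⟨t, htB, htG, htD⟩ := mem_residual.1 hB
  obtain ⟨f, hfo, rfl⟩ := isGδ_iff_eq_iInter_nat.1 htG
  refine ⟨fun n => (f n)ᶜ, fun n => ?_, fun y hy => ?_⟩
  · rw [isClosed_isNowhereDense_iff_compl, compl_compl]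
    exact ⟨hfo n, htD.mono (iInter_subset f n)⟩
  · have : y ∉ ⋂ n, f n := fun h => htB h hy
    simpa using this

lemma isMeagre_setOf_eventually_le (f : ℕ → ℕ) :
    IsMeagre {y : ℕ → ℕ | ∀ᶠ k in atTop, y k ≤ f k} := by
  have hcover : {y : ℕ → ℕ | ∀ᶠ k in atTop, y k ≤ f k} ⊆ ⋃ N, {y | ∀ k ≥ N, y k ≤ f k} :=
    fun y hy => mem_iUnion.2 (eventually_atTop.1 hy)
  refine (isMeagre_iUnion fun N => IsNowhereDense.isMeagre ?_).mono hcover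
  refine isNowhereDense_of_exists_disjoint_cylinder fun s L => ?_
  set M := max L N
  refine ⟨Function.update s M (f M + 1), fun i hi => Function.update_of_ne (by omega) _ _,
    M + 1, disjoint_left.2 fun y hy hyf => ?_⟩
  have h1 : y M = f M + 1 := by simpa using hy M (Nat.lt_succ_self M)
  have h2 : y M ≤ f M := hyf M (le_max_right _ _)
  omega

lemma isMeagre_singleton (x : ℕ → ℕ) : IsMeagre ({x} : Set (ℕ → ℕ)) :=
  (isMeagre_setOf_eventually_le x).mono fun y hy => by
    rw [mem_singleton_iff.1 hy]
    exact Eventually.of_forall fun _ => le_rfl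

lemma not_isMeagre_univ : ¬ IsMeagre (univ : Set (ℕ → ℕ)) :=
  not_isMeagre_of_isOpen isOpen_univ univ_nonempty

lemma ofFamily_mIdeal_isUnbounded_univ : (RelSys.ofFamily MIdeal).IsUnbounded univ := by
  rintro (B : MIdeal)
  obtain ⟨y, hy⟩ : ∃ y, y ∉ (B : Set (ℕ → ℕ)) := by
    by_contra! h
    exact not_isMeagre_univ (B.2.mono fun y _ => h y)
  exact ⟨⟨{y}, isMeagre_singleton y⟩, mem_univ _, fun h => hy (h rfl)⟩

lemma aleph0_le_dnum_ofFamily_mIdeal : ℵ₀ ≤ dnum (RelSys.ofFamily MIdeal) := by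
  refine RelSys.aleph0_le_dnum (fun A => ⟨A, mem_univ _, subset_rfl⟩) fun D hD hfin => ?_
  refine not_isMeagre_univ ((isMeagre_biUnion hfin.countable fun B _ => B.2).mono fun y _ => ?_)
  obtain ⟨B, hB, hyB⟩ := hD ⟨{y}, isMeagre_singleton y⟩
  exact mem_biUnion hB (hyB rfl)

/-! ## Meagre sets of a finitely branching box -/

/-- `C` is nowhere dense in the compact box `Iic G = ∏ k, [0, G k]`, stated with cylinders. -/
def IsNowhereDenseIn (G : ℕ → ℕ) (C : Set (ℕ → ℕ)) : Prop :=
  ∀ s ≤ G, ∀ L, ∃ t ≤ G, t ∈ cylinder s L ∧ ∃ L' ≥ L, Disjoint (Iic G ∩ cylinder t L') C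

def IsMeagreIn (G : ℕ → ℕ) (S : Set (ℕ → ℕ)) : Prop :=
  ∃ 𝒞 : Set (Set (ℕ → ℕ)), 𝒞.Countable ∧ (∀ C ∈ 𝒞, IsNowhereDenseIn G C) ∧ S ∩ Iic G ⊆ ⋃₀ 𝒞

namespace IsNowhereDenseIn

variable {G : ℕ → ℕ} {C D : Set (ℕ → ℕ)}

lemma empty (G : ℕ → ℕ) : IsNowhereDenseIn G ∅ :=
  fun s hs L => ⟨s, hs, self_mem_cylinder s L, L, le_rfl, disjoint_empty _⟩

lemma union (hC : IsNowhereDenseIn G C) (hD : IsNowhereDenseIn G D) :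
    IsNowhereDenseIn G (C ∪ D) := by
  intro s hs L
  obtain ⟨t₁, ht₁, hst₁, L₁, hL₁, hdisj₁⟩ := hC s hs L
  obtain ⟨t₂, ht₂, hst₂, L₂, hL₂, hdisj₂⟩ := hD t₁ ht₁ L₁
  have hsub : cylinder t₂ L₂ ⊆ cylinder t₁ L₁ := cylinder_subset_cylinder hL₂ hst₂
  refine ⟨t₂, ht₂, cylinder_subset_cylinder hL₁ hst₁ hst₂, L₂,
    hL₁.trans hL₂, disjoint_union_right.2 ⟨?_, hdisj₂⟩⟩
  exact hdisj₁.mono_left (inter_subset_inter_right _ hsub)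

lemma accumulate {F : ℕ → Set (ℕ → ℕ)} (hF : ∀ n, IsNowhereDenseIn G (F n)) (n : ℕ) :
    IsNowhereDenseIn G (accumulate F n) := by
  induction n with
  | zero => rw [accumulate_zero_nat]; exact hF 0
  | succ n ih => rw [accumulate_succ]; exact ih.union (hF _)

end IsNowhereDenseIn

lemma IsMeagreIn.isMeagre_preimage_inf {G : ℕ → ℕ} {S : Set (ℕ → ℕ)} (h : IsMeagreIn G S) :
    IsMeagre {y | y ⊓ G ∈ S} := by
  obtain ⟨𝒞, h𝒞, hnwd, hS⟩ := h
  rw [isMeagre_iff_countable_union_isNowhereDense]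
  refine ⟨(fun C => {y | y ⊓ G ∈ C}) '' 𝒞, ?_, h𝒞.image _, fun y hy => ?_⟩
  · rintro _ ⟨C, hC, rfl⟩
    refine isNowhereDense_of_exists_disjoint_cylinder fun s L => ?_
    obtain ⟨t, htG, hst, L', -, hdisj⟩ := hnwd C hC (s ⊓ G) inf_le_right L
    refine ⟨(Iio L).piecewise s t, piecewise_Iio_mem_cylinder, L',
      disjoint_left.2 fun y hy hyC =>
        disjoint_left.1 hdisj ⟨mem_Iic.2 inf_le_right, fun i hi => ?_⟩ hyC⟩
    rw [Pi.inf_apply, hy i hi]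
    by_cases hiL : i < L
    · rw [piecewise_Iio_of_lt hiL]
      exact (hst i hiL).symm
    · rw [piecewise_Iio_of_not_lt hiL]
      exact inf_eq_left.2 (htG i)
  · obtain ⟨C, hC, hyC⟩ := hS ⟨hy, mem_Iic.2 inf_le_right⟩
    exact ⟨_, mem_image_of_mem _ hC, hyC⟩

lemma exists_finset_forall_mem_cylinder (G : ℕ → ℕ) (a : ℕ) :
    ∃ T : Finset (ℕ → ℕ), (∀ s ∈ T, s ≤ G) ∧ ∀ y ≤ G, ∃ s ∈ T, y ∈ cylinder s a := by
  classical
  let extend : (∀ i : Fin a, Fin (G i + 1)) → ℕ → ℕ := fun t i =>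
    if h : i < a then t ⟨i, h⟩ else 0
  refine ⟨Finset.univ.image extend, ?_, fun y hy => ?_⟩
  · simp only [Finset.mem_image, Finset.mem_univ, true_and, forall_exists_index]
    rintro _ t rfl i
    by_cases h : i < a
    · simpa [extend, h] using Nat.lt_succ_iff.1 (t ⟨i, h⟩).2
    · simp [extend, h]
  · refine ⟨extend fun i => ⟨y i, Nat.lt_succ_of_le (hy i)⟩, Finset.mem_image_of_mem _
      (Finset.mem_univ _), fun i hi => ?_⟩
    simp [extend, hi]

namespace IsNowhereDenseIn

variable {G : ℕ → ℕ} {C : Set (ℕ → ℕ)}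

lemma exists_common_extension (hC : IsNowhereDenseIn G C) (a : ℕ) {T : Finset (ℕ → ℕ)}
    (hT : ∀ s ∈ T, s ≤ G) :
    ∃ t ≤ G, ∃ b ≥ a, ∀ s ∈ T, Disjoint (Iic G ∩ cylinder ((Iio a).piecewise s t) b) C := by
  classical
  induction T using Finset.induction_on with
  | empty => exact ⟨G, le_rfl, a, le_rfl, by simp⟩
  | insert s T _ ih =>
    obtain ⟨t, htG, b, hab, hdisj⟩ := ih fun u hu => hT u (Finset.mem_insert_of_mem hu)
    have hsG : (Iio a).piecewise s t ≤ G :=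
      piecewise_le (fun i _ => hT s (Finset.mem_insert_self s T) i) fun i _ => htG i
    obtain ⟨t', ht'G, ht', b', hbb', hdisj'⟩ := hC _ hsG b
    refine ⟨t', ht'G, b', hab.trans hbb', fun u hu => ?_⟩
    rcases Finset.mem_insert.1 hu with rfl | hu
    · rwa [← mem_cylinder_iff_eq.1 fun i _ => ?_] at hdisj'
      by_cases hi : i < a
      · rw [piecewise_Iio_of_lt hi, ht' i (hi.trans_le hab),
          piecewise_Iio_of_lt hi]
      · rw [piecewise_Iio_of_not_lt hi]
    · refine (hdisj u hu).mono_left (inter_subset_inter_right _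
        (cylinder_subset_cylinder hbb' fun i hi => ?_))
      by_cases hia : i < a
      · simp only [piecewise_Iio_of_lt hia]
      · rw [piecewise_Iio_of_not_lt hia,
          piecewise_Iio_of_not_lt hia, ht' i hi,
          piecewise_Iio_of_not_lt hia]

/-- As the box is finitely branching, a single block of values on `[a, b)` avoids `C` after every
prefix of length `a`. -/
lemma exists_block (hC : IsNowhereDenseIn G C) (a : ℕ) {x : ℕ → ℕ} (hx : x ≤ G) :
    ∃ x' ≤ G, x' ∈ cylinder x a ∧ ∃ b > a,
      ∀ y ≤ G, (∀ i, a ≤ i → i < b → y i = x' i) → y ∉ C := by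
  obtain ⟨T, hTG, hT⟩ := exists_finset_forall_mem_cylinder G a
  obtain ⟨t, htG, b, hab, hdisj⟩ := hC.exists_common_extension a hTG
  refine ⟨(Iio a).piecewise x t, piecewise_le (fun i _ => hx i) fun i _ => htG i,
    piecewise_Iio_mem_cylinder, b + 1, by omega, fun y hy hyx hyC => ?_⟩
  obtain ⟨s, hs, hys⟩ := hT y hy
  refine disjoint_left.1 (hdisj s hs) ⟨hy, fun i hi => ?_⟩ hyC
  by_cases hia : i < a
  · rw [piecewise_Iio_of_lt hia]; exact hys i hia
  · rw [piecewise_Iio_of_not_lt hia, hyx i (not_lt.1 hia) (by omega),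
      piecewise_Iio_of_not_lt hia]

end IsNowhereDenseIn

/-- One half of the classical characterization of the meagre subsets of `2^ω` by interval
partitions (Bartoszyński), in any finitely branching box. -/
theorem IsMeagreIn.exists_intPart {G : ℕ → ℕ} {S : Set (ℕ → ℕ)} (h : IsMeagreIn G S) :
    ∃ (J : IntPart) (x : ℕ → ℕ), x ≤ G ∧ ∀ y ∈ S ∩ Iic G,
      ∀ᶠ n in atTop, ∃ i, J.e n ≤ i ∧ i < J.e (n + 1) ∧ y i ≠ x i := by
  obtain ⟨𝒞, h𝒞, hnwd, hS⟩ := h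
  obtain ⟨F, hF⟩ := (h𝒞.insert ∅).exists_eq_range (insert_nonempty _ _)
  have hFnwd : ∀ n, IsNowhereDenseIn G (F n) := fun n => by
    rcases (hF ▸ mem_range_self n : F n ∈ insert ∅ 𝒞) with h | h
    · rw [h]; exact IsNowhereDenseIn.empty G
    · exact hnwd _ h
  obtain ⟨st, hst0, hst⟩ := exists_seq_of_forall_exists (a := ((0 : ℕ), G))
    (P := fun q => q.2 ≤ G)
    (Q := fun n q r => r.2 ∈ cylinder q.2 q.1 ∧ q.1 < r.1 ∧
      ∀ y ≤ G, (∀ i, q.1 ≤ i → i < r.1 → y i = r.2 i) → y ∉ accumulate F n) le_rfl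
    (fun n q hq => by
      obtain ⟨x', hx'G, hx', b, hb, hkill⟩ := (IsNowhereDenseIn.accumulate hFnwd n).exists_block
        q.1 hq
      exact ⟨(b, x'), hx'G, hx', hb, hkill⟩)
  have hmono : StrictMono fun n => (st n).1 := strictMono_nat_of_lt_succ fun n => (hst n).2.2.1
  obtain ⟨x, hx, hxst⟩ := exists_forall_mem_cylinder hmono fun n => (hst n).2.1
  refine ⟨⟨fun n => (st n).1, by rw [hst0], hmono⟩, x, fun i => ?_, fun y ⟨hyS, hyG⟩ => ?_⟩
  · rw [hxst]; exact (hst (i + 1)).1 i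
  have hyF : y ∈ ⋃ n, F n := by
    obtain ⟨C, hC, hyC⟩ := hS ⟨hyS, hyG⟩
    rw [← sUnion_range, ← hF]
    exact ⟨C, mem_insert_of_mem _ hC, hyC⟩
  obtain ⟨N, hN⟩ := mem_iUnion.1 hyF
  refine eventually_atTop.2 ⟨N, fun n hn => ?_⟩
  by_contra! hagree
  exact (hst n).2.2.2 y hyG (fun i h₁ h₂ => (hagree i h₁ h₂).trans (hx (n + 1) i h₂))
    (monotone_accumulate hn (subset_accumulate hN))

def fibreKernel (G : ℕ → ℕ) (B : Set (ℕ → ℕ)) : Set (ℕ → ℕ) := {p | ∀ y, y ⊓ G = p → y ∈ B}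

/-- For closed nowhere dense `F`, countably many of these sets cover `fibreKernel G (⋃ m, F m)`
(`exists_mem_fibrePiece`), and each is nowhere dense in the box. -/
def fibrePiece (G : ℕ → ℕ) (F : Set (ℕ → ℕ)) (L : ℕ) (u : ℕ → ℕ) : Set (ℕ → ℕ) :=
  {p | (∀ i < L, min (u i) (G i) = p i) ∧ ∀ y, y ⊓ G = p → y ∈ cylinder u L → y ∈ F}

lemma fibrePiece_congr {G : ℕ → ℕ} {F : Set (ℕ → ℕ)} {L : ℕ} {u u' : ℕ → ℕ}
    (h : ∀ i < L, u i = u' i) : fibrePiece G F L u = fibrePiece G F L u' := by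
  ext p
  simp only [fibrePiece, mem_ofPred_eq, mem_cylinder_iff_eq.1 h]
  exact and_congr (forall₂_congr fun i hi => by rw [h i hi]) Iff.rfl

lemma isNowhereDenseIn_fibrePiece {G : ℕ → ℕ} {F : Set (ℕ → ℕ)} (hcl : IsClosed F)
    (hnwd : IsNowhereDense F) (L : ℕ) (u : ℕ → ℕ) : IsNowhereDenseIn G (fibrePiece G F L u) := by
  intro v hv ℓ
  by_cases hbad : ∃ i < L, i < ℓ ∧ min (u i) (G i) ≠ v i
  · obtain ⟨i, hiL, hiℓ, hne⟩ := hbad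
    refine ⟨v, hv, self_mem_cylinder v ℓ, ℓ, le_rfl, disjoint_left.2 ?_⟩
    rintro p ⟨-, hp⟩ ⟨hpu, -⟩
    exact hne ((hpu i hiL).trans (hp i hiℓ))
  push Not at hbad
  obtain ⟨w', hw', Lw, hLw, hdisj⟩ := hnwd.exists_disjoint_cylinder hcl
    ((Iio L).piecewise u ((Iio ℓ).piecewise v G)) (max L ℓ)
  refine ⟨(Iio ℓ).piecewise v (w' ⊓ G), piecewise_le (fun i _ => hv i) fun i _ => inf_le_right,
    piecewise_Iio_mem_cylinder, Lw, (le_max_right _ _).trans hLw, disjoint_left.2 ?_⟩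
  rintro p ⟨hpG, hpt⟩ ⟨-, hpF⟩
  have hw'w : ∀ i < max L ℓ, w' i = (Iio L).piecewise u ((Iio ℓ).piecewise v G) i := hw'
  -- the point of the fibre of `p` that follows `w'` below `Lw` lies in `F`
  refine disjoint_left.1 hdisj (piecewise_Iio_mem_cylinder (a := Lw) (g := p))
    (hpF _ ?_ fun i hi => ?_)
  · funext i
    simp only [Pi.inf_apply]
    by_cases hiw : i < Lw
    · rw [piecewise_Iio_of_lt hiw, hpt i hiw]
      by_cases hiℓ : i < ℓ
      · rw [piecewise_Iio_of_lt hiℓ, hw'w i (lt_max_of_lt_right hiℓ)]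
        by_cases hiL : i < L
        · rw [piecewise_Iio_of_lt hiL]; exact hbad i hiL hiℓ
        · rw [piecewise_Iio_of_not_lt hiL, piecewise_Iio_of_lt hiℓ]
          exact min_eq_left (hv i)
      · rw [piecewise_Iio_of_not_lt hiℓ]; rfl
    · rw [piecewise_Iio_of_not_lt hiw]; exact min_eq_left (hpG i)
  · have hiM : i < max L ℓ := lt_max_of_lt_left hi
    rw [piecewise_Iio_of_lt (hiM.trans_le hLw), hw'w i hiM, piecewise_Iio_of_lt hi]

/-- The Baire category theorem inside the fibre of `p`. -/
lemma exists_mem_fibrePiece {G p : ℕ → ℕ} (hp : p ≤ G) {F : ℕ → Set (ℕ → ℕ)}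
    (hF : ∀ m, IsClosed (F m)) (hpF : p ∈ fibreKernel G (⋃ m, F m)) :
    ∃ m L u, p ∈ fibrePiece G (F m) L u := by
  by_contra! hnot
  obtain ⟨st, hst0, hst⟩ := exists_seq_of_forall_exists (a := ((0 : ℕ), p))
    (P := fun q => q.2 ⊓ G = p)
    (Q := fun m q r => r.2 ∈ cylinder q.2 q.1 ∧ q.1 < r.1 ∧ Disjoint (cylinder r.2 r.1) (F m))
    (inf_eq_left.2 hp) (fun m q hq => by
      have hcompat : ∀ i < q.1, min (q.2 i) (G i) = p i := fun i _ => congrFun hq i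
      obtain ⟨y, hyp, hyq, hyF⟩ := (by simpa [fibrePiece] using hnot m q.1 q.2 :
        (∀ i < q.1, min (q.2 i) (G i) = p i) → ∃ y, y ⊓ G = p ∧ y ∈ cylinder q.2 q.1 ∧ y ∉ F m)
        hcompat
      obtain ⟨L, hL⟩ := exists_cylinder_subset (hF m).isOpen_compl hyF
      exact ⟨(max L (q.1 + 1), y), hyp, hyq, by omega,
        disjoint_compl_right_iff_subset.2 ((cylinder_anti y (le_max_left _ _)).trans hL)
          |>.mono_right (compl_compl (F m)).ge⟩)
  have hmono : StrictMono fun n => (st n).1 := strictMono_nat_of_lt_succ fun n => (hst n).2.2.1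
  obtain ⟨z, hz, hzst⟩ := exists_forall_mem_cylinder hmono fun n => (hst n).2.1
  have hzp : z ⊓ G = p := funext fun i => by
    rw [Pi.inf_apply, hzst]; exact congrFun (hst (i + 1)).1 i
  obtain ⟨m, hm⟩ := mem_iUnion.1 (hpF z hzp)
  exact disjoint_left.1 (hst m).2.2.2 (hz (m + 1)) hm

theorem IsMeagre.isMeagreIn_fibreKernel {B : Set (ℕ → ℕ)} (hB : IsMeagre B) (G : ℕ → ℕ) :
    IsMeagreIn G (fibreKernel G B) := by
  obtain ⟨F, hF, hBF⟩ := hB.exists_isClosed_isNowhereDense_cover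
  let piece : ℕ × (Σ L : ℕ, Fin L → ℕ) → Set (ℕ → ℕ) := fun k =>
    fibrePiece G (F k.1) k.2.1 fun i => if h : i < k.2.1 then k.2.2 ⟨i, h⟩ else 0
  refine ⟨range piece, countable_range piece, ?_, fun p ⟨hpB, hpG⟩ => ?_⟩
  · rintro _ ⟨k, rfl⟩
    exact isNowhereDenseIn_fibrePiece (hF _).1 (hF _).2 _ _
  obtain ⟨m, L, u, hp⟩ := exists_mem_fibrePiece hpG (fun m => (hF m).1)
    fun y hy => hBF (hpB y hy)
  refine ⟨_, mem_range_self (m, ⟨L, fun i => u i⟩), ?_⟩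
  show p ∈ fibrePiece G (F m) L fun i => if h : i < L then u i else 0
  rwa [fibrePiece_congr (u' := u) fun i hi => dif_pos hi]

/-! ## `R_ω` reduces to two rounds of the meagre ideal -/

lemma exists_escape_bound {F : ℕ → Set (ℕ → ℕ)} (hF : ∀ n, IsClosed (F n) ∧ IsNowhereDense (F n))
    (N a b : ℕ) : ∃ c, ∀ n < N, ∀ s ≤ (fun _ => b), ∃ t ∈ cylinder s a, ∃ L ≥ a,
      (∀ i < L, t i ≤ c) ∧ Disjoint (cylinder t L) (F n) := by
  obtain ⟨T, -, hT⟩ := exists_finset_forall_mem_cylinder (fun _ => b) a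
  have hesc : ∀ n s, ∃ q : (ℕ → ℕ) × ℕ, q.1 ∈ cylinder s a ∧ a ≤ q.2 ∧
      Disjoint (cylinder q.1 q.2) (F n) := fun n s => by
    obtain ⟨t, ht, L, hL, hdisj⟩ := (hF n).2.exists_disjoint_cylinder (hF n).1 s a
    exact ⟨(t, L), ht, hL, hdisj⟩
  choose esc hesc using hesc
  let size : (ℕ → ℕ) × ℕ → ℕ := fun q => (Finset.range q.2).sup q.1
  refine ⟨(Finset.range N ×ˢ T).sup fun p => size (esc p.1 p.2), fun n hn s hs => ?_⟩
  obtain ⟨s₀, hs₀, hss₀⟩ := hT s hs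
  obtain ⟨ht, hL, hdisj⟩ := hesc n s₀
  have hsize : size (esc n s₀) ≤ (Finset.range N ×ˢ T).sup fun p => size (esc p.1 p.2) :=
    Finset.le_sup (f := fun p => size (esc p.1 p.2)) (b := (n, s₀))
      (Finset.mem_product.2 ⟨Finset.mem_range.2 hn, hs₀⟩)
  refine ⟨(esc n s₀).1, ?_, (esc n s₀).2, hL, fun i hi => ?_, hdisj⟩
  · rw [mem_cylinder_iff_eq.1 hss₀]; exact ht
  · exact (Finset.le_sup (Finset.mem_range.2 hi)).trans hsize

lemma exists_escape_scale {F : ℕ → Set (ℕ → ℕ)}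
    (hF : ∀ n, IsClosed (F n) ∧ IsNowhereDense (F n)) :
    ∃ g : ℕ → ℕ, Monotone g ∧ ∀ j, ∀ n < j + 2, ∀ s ≤ (fun _ => g j), ∃ t ∈ cylinder s (j + 1),
      ∃ L ≥ j + 1, (∀ i < L, t i ≤ g (j + 1)) ∧ Disjoint (cylinder t L) (F n) := by
  choose c hc using exists_escape_bound hF
  let g : ℕ → ℕ := fun k => Nat.rec 0 (fun j gj => max gj (c (j + 2) (j + 1) gj)) k
  have hg : ∀ j, g (j + 1) = max (g j) (c (j + 2) (j + 1) (g j)) := fun j => rfl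
  refine ⟨g, monotone_nat_of_le_succ fun j => hg j ▸ le_max_left _ _, fun j n hn s hs => ?_⟩
  obtain ⟨t, ht, L, hL, htc, hdisj⟩ := hc (j + 2) (j + 1) (g j) n hn s hs
  exact ⟨t, ht, L, hL, fun i hi => (htc i hi).trans (hg j ▸ le_max_right _ _), hdisj⟩

/-- Escape from `F 0, F 1, …` in turn, each time at a place where `f` is above `g`. -/
lemma exists_le_forall_notMem {F : ℕ → Set (ℕ → ℕ)} {g f : ℕ → ℕ} (hg : Monotone g)
    (hesc : ∀ j, ∀ n < j + 2, ∀ s ≤ (fun _ => g j), ∃ t ∈ cylinder s (j + 1),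
      ∃ L ≥ j + 1, (∀ i < L, t i ≤ g (j + 1)) ∧ Disjoint (cylinder t L) (F n))
    (hf : Monotone f) (hfg : ∃ᶠ k in atTop, g k < f k) : ∃ y ≤ f, ∀ n, y ∉ F n := by
  have hfreq : ∀ M, ∃ j ≥ M, g (j + 1) < f (j + 1) := fun M => by
    obtain ⟨k, hk, hgk⟩ := frequently_atTop.1 hfg (M + 1)
    exact ⟨k - 1, by omega, by rwa [Nat.sub_add_cancel (by omega)]⟩
  obtain ⟨st, -, hst⟩ := exists_seq_of_forall_exists (a := ((0 : ℕ), (0 : ℕ → ℕ)))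
    (P := fun q => q.2 ≤ (fun _ => g q.1) ∧ q.2 ≤ f)
    (Q := fun n q r => r.2 ∈ cylinder q.2 q.1 ∧ q.1 < r.1 ∧ Disjoint (cylinder r.2 r.1) (F n))
    ⟨fun _ => Nat.zero_le _, fun _ => Nat.zero_le _⟩ (fun n q ⟨hqg, hqf⟩ => by
      obtain ⟨j, hj, hgf⟩ := hfreq (max q.1 n)
      obtain ⟨t, ht, L, hL, htg, hdisj⟩ := hesc j n (by omega) q.2
        fun i => (hqg i).trans (hg (by omega))
      have htf : ∀ i < L, t i ≤ f i := fun i hi => by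
        by_cases hij : i < j + 1
        · rw [ht i hij]; exact hqf i
        · exact (htg i hi).trans (hgf.le.trans (hf (by omega)))
      refine ⟨(L + 1, (Iio L).piecewise t 0), ⟨piecewise_le
        (fun i hi => (htg i hi).trans (hg (show j + 1 ≤ L + 1 by omega)))
        fun _ _ => Nat.zero_le _, piecewise_le htf fun _ _ => Nat.zero_le _⟩,
        fun i hi => ?_, by omega, hdisj.mono_left (cylinder_subset_cylinder (Nat.le_succ L)
          piecewise_Iio_mem_cylinder)⟩
      show (Iio L).piecewise t 0 i = q.2 i
      rw [piecewise_Iio_of_lt (by omega)]; exact ht i (by omega))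
  have hmono : StrictMono fun n => (st n).1 := strictMono_nat_of_lt_succ fun n => (hst n).2.2.1
  obtain ⟨y, hy, hyst⟩ := exists_forall_mem_cylinder hmono fun n => (hst n).2.1
  exact ⟨y, fun i => hyst i ▸ (hst (i + 1)).1.2 i,
    fun n hn => disjoint_left.1 (hst n).2.2.2 (hy (n + 1)) hn⟩

theorem IsMeagre.exists_eventually_le {B : Set (ℕ → ℕ)} (hB : IsMeagre B) :
    ∃ g : ℕ → ℕ, ∀ f : ℕ → ℕ, Monotone f → {y | ∀ᶠ k in atTop, y k ≤ f k} ⊆ B →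
      ∀ᶠ k in atTop, f k ≤ g k := by
  obtain ⟨F, hF, hBF⟩ := hB.exists_isClosed_isNowhereDense_cover
  obtain ⟨g, hg, hesc⟩ := exists_escape_scale hF
  refine ⟨g, fun f hf hfB => ?_⟩
  by_contra hfg
  obtain ⟨y, hyf, hyF⟩ := exists_le_forall_notMem hg hesc hf
    ((not_eventually.1 hfg).mono fun _ => lt_of_not_ge)
  obtain ⟨n, hn⟩ := mem_iUnion.1 (hBF (hfB (Eventually.of_forall hyf)))
  exact hyF n hn

lemma isMeagreIn_setOf_eventually_ne {G f : ℕ → ℕ} (hf : f ≤ G) :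
    IsMeagreIn G {y | ∀ᶠ k in atTop, y k ≠ f k} := by
  refine ⟨range fun N => {y | ∀ k ≥ N, y k ≠ f k}, countable_range _, ?_, fun y ⟨hy, _⟩ => ?_⟩
  swap
  · obtain ⟨N, hN⟩ := eventually_atTop.1 hy
    exact mem_sUnion_of_mem (t := {y : ℕ → ℕ | ∀ k ≥ N, y k ≠ f k}) hN (mem_range_self N)
  rintro _ ⟨N, rfl⟩ s hs L
  set M := max L N
  refine ⟨Function.update s M (f M), fun i => ?_, fun i hi => Function.update_of_ne (by omega) _ _,
    M + 1, by omega, disjoint_left.2 fun y ⟨_, hy⟩ hyf => hyf M (le_max_right _ _) ?_⟩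
  · by_cases hi : i = M
    · rw [hi, Function.update_self]; exact hf M
    · rw [Function.update_of_ne hi]; exact hs i
  · simpa using hy M (Nat.lt_succ_self M)

lemma eventually_exists_eq_of_forall_eventually_ne {G x f : ℕ → ℕ} (hG : ∀ k, 1 ≤ G k)
    (hx : x ≤ G) {J : IntPart}
    (h : ∀ p ≤ G, (∀ᶠ k in atTop, p k ≠ f k) →
      ∀ᶠ n in atTop, ∃ i, J.e n ≤ i ∧ i < J.e (n + 1) ∧ p i ≠ x i) :
    ∀ᶠ n in atTop, ∃ k, J.e n ≤ k ∧ k < J.e (n + 1) ∧ x k = f k := by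
  classical
  -- `p` agrees with `x` off the matches of `x` with `f`, and avoids `f` everywhere
  let p : ℕ → ℕ := fun k => if x k = f k then (if f k = 0 then 1 else 0) else x k
  have hpG : p ≤ G := fun k => by
    simp only [p]; split_ifs <;> first | exact hG k | exact Nat.zero_le _ | exact hx k
  have hpf : ∀ k, p k ≠ f k := fun k => by
    simp only [p]; split_ifs <;> omega
  filter_upwards [h p hpG (Eventually.of_forall hpf)] with n ⟨i, hi₁, hi₂, hpx⟩
  by_contra! hne
  exact hpx (if_neg (hne i hi₁ hi₂))

lemma sqb_of_eventually_exists_eq {J : IntPart} {f f' x : ℕ → ℕ}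
    (hff' : ∀ᶠ k in atTop, f k = f' k)
    (h : ∀ᶠ n in atTop, ∃ k, J.e n ≤ k ∧ k < J.e (n + 1) ∧ x k = f' k) : sqb J f x := by
  obtain ⟨K, hK⟩ := eventually_atTop.1 hff'
  filter_upwards [h, eventually_ge_atTop K] with n ⟨k, hk₁, hk₂, hxk⟩ hn
  exact ⟨k, hk₁, hk₂, (hK k (hn.trans ((J.mono.id_le n).trans hk₁))).trans hxk.symm⟩

theorem nonempty_seqTukey_romega_mIdeal :
    Nonempty (RelSys.SeqTukey Romega (RelSys.ofFamily MIdeal)) := by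
  choose g hg using fun B : MIdeal => IsMeagre.exists_eventually_le B.2
  let G : MIdeal → ℕ → ℕ := fun B k => g B k + 1
  choose J x hxG hJx using fun B₁ B₂ : MIdeal =>
    (IsMeagre.isMeagreIn_fibreKernel B₂.2 (G B₁)).exists_intPart
  refine ⟨{
    first := fun (f : ℕ → ℕ) => ⟨{y | ∀ᶠ k in atTop, y k ≤ partialSups f k},
      isMeagre_setOf_eventually_le _⟩
    second := fun B₁ (f : ℕ → ℕ) =>
      ⟨{y | y ⊓ G B₁ ∈ {p : ℕ → ℕ | ∀ᶠ k in atTop, p k ≠ (f ⊓ G B₁) k}},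
        (isMeagreIn_setOf_eventually_ne inf_le_right).isMeagre_preimage_inf⟩
    out := fun B₁ B₂ => (J B₁ B₂, x B₁ B₂)
    spec := fun (f : ℕ → ℕ) B₁ B₂ h₁ h₂ => ?_ }⟩
  have hfg : ∀ᶠ k in atTop, f k = (f ⊓ G B₁) k := by
    filter_upwards [hg B₁ (partialSups f) (partialSups f).monotone h₁] with k hk
    exact (inf_eq_left.2 (((le_partialSups f) k).trans (hk.trans (Nat.le_succ _)))).symm
  refine sqb_of_eventually_exists_eq hfg
    (eventually_exists_eq_of_forall_eventually_ne (fun k => Nat.le_add_left 1 (g B₁ k))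
      (hxG B₁ B₂) fun p hpG hpf => hJx B₁ B₂ p ⟨fun y hy => h₂ ?_, hpG⟩)
  show y ⊓ G B₁ ∈ {p : ℕ → ℕ | ∀ᶠ k in atTop, p k ≠ (f ⊓ G B₁) k}
  rwa [hy]

/-! ## The meagre ideal reduces to two rounds of `R_ω` -/

lemma IntPart.exists_mem (I : IntPart) (i : ℕ) : ∃ n, I.e n ≤ i ∧ i < I.e (n + 1) := by
  classical
  have hex : ∃ n, i < I.e (n + 1) := ⟨i, (Nat.lt_succ_self i).trans_le (I.mono.id_le _)⟩
  refine ⟨Nat.find hex, ?_, Nat.find_spec hex⟩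
  rcases Nat.eq_zero_or_eq_succ_pred (Nat.find hex) with h | h
  · rw [h, I.zero]; exact Nat.zero_le i
  · rw [h]; exact not_lt.1 (Nat.find_min hex (h ▸ Nat.pred_lt_self (by omega)))

lemma IntPart.eq_of_mem {I : IntPart} {i n n' : ℕ} (h₁ : I.e n ≤ i) (h₂ : i < I.e (n + 1))
    (h₁' : I.e n' ≤ i) (h₂' : i < I.e (n' + 1)) : n = n' := by
  have := I.mono.lt_iff_lt.1 (h₁.trans_lt h₂')
  have := I.mono.lt_iff_lt.1 (h₁'.trans_lt h₂)
  omega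

/-- The starting points `∑_{i<j} (f i + 1)` of the blocks `1^(f j) 0` of the unary code of `f`. -/
def blocks (f : ℕ → ℕ) : IntPart where
  e j := ∑ i ∈ Finset.range j, (f i + 1)
  zero := Finset.sum_range_zero _
  mono := strictMono_nat_of_lt_succ fun j => by rw [Finset.sum_range_succ]; omega

lemma blocks_succ (f : ℕ → ℕ) (j : ℕ) : (blocks f).e (j + 1) = (blocks f).e j + f j + 1 :=
  Finset.sum_range_succ _ j

lemma blocks_congr {f u : ℕ → ℕ} {c : ℕ} (h : ∀ j < c, f j = u j) :
    (blocks f).e c = (blocks u).e c :=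
  show ∑ j ∈ Finset.range c, (f j + 1) = ∑ j ∈ Finset.range c, (u j + 1) from
    Finset.sum_congr rfl fun j hj => by rw [h j (Finset.mem_range.1 hj)]

open Classical in
/-- The unary code `1^(f 0) 0 1^(f 1) 0 …` of `f`, an element of Cantor space `Iic 1`. -/
noncomputable def unary (f : ℕ → ℕ) (k : ℕ) : ℕ := if k + 1 ∈ range (blocks f).e then 0 else 1

lemma unary_le_one (f : ℕ → ℕ) : unary f ≤ 1 := fun k => by
  unfold unary; split_ifs <;> simp

lemma unary_of_mem_block {f : ℕ → ℕ} {j k : ℕ} (h₁ : (blocks f).e j ≤ k)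
    (h₂ : k < (blocks f).e (j + 1)) :
    unary f k = if k + 1 = (blocks f).e (j + 1) then 0 else 1 := by
  have hiff : k + 1 ∈ range (blocks f).e ↔ k + 1 = (blocks f).e (j + 1) := by
    refine ⟨fun ⟨i, hi⟩ => ?_, fun h => ⟨j + 1, h.symm⟩⟩
    have := (blocks f).mono.lt_iff_lt.1 (h₁.trans_lt (Nat.lt_succ_self k |>.trans_eq hi.symm))
    have := (blocks f).mono.le_iff_le.1 (hi.trans_le h₂)
    rw [← hi, show i = j + 1 by omega]
  unfold unary
  simp only [hiff]

theorem unary_eqOn_iff {f u : ℕ → ℕ} {c : ℕ} :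
    (∀ k < (blocks u).e c, unary f k = unary u k) ↔ ∀ j < c, f j = u j := by
  refine ⟨fun h => ?_, fun h k hk => ?_⟩
  · induction c with
    | zero => exact fun j hj => absurd hj (Nat.not_lt_zero j)
    | succ c ih =>
      have hc := ih fun k hk => h k (hk.trans ((blocks u).mono (Nat.lt_succ_self c)))
      have hS := blocks_congr hc
      have hf := blocks_succ f c
      have hu := blocks_succ u c
      intro j hj
      rcases Nat.lt_succ_iff_lt_or_eq.1 hj with hj | rfl
      · exact hc j hj
      by_contra hne
      rcases Nat.lt_or_gt_of_ne hne with hlt | hlt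
      · have hk := h ((blocks f).e j + f j) (by omega)
        rw [unary_of_mem_block (f := f) (j := j) (by omega) (by omega),
          unary_of_mem_block (f := u) (j := j) (by omega) (by omega),
          if_pos (by omega), if_neg (by omega)] at hk
        exact zero_ne_one hk
      · have hk := h ((blocks u).e j + u j) (by omega)
        rw [unary_of_mem_block (f := f) (j := j) (by omega) (by omega),
          unary_of_mem_block (f := u) (j := j) (by omega) (by omega),
          if_neg (by omega), if_pos (by omega)] at hk
        exact one_ne_zero hk
  · obtain ⟨j, hj₁, hj₂⟩ := (blocks u).exists_mem k
    have hjc : j < c := (blocks u).mono.lt_iff_lt.1 (hj₁.trans_lt hk)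
    have hstart := blocks_congr (c := j) fun i hi => h i (hi.trans hjc)
    have hend := blocks_congr (c := j + 1) fun i hi => h i (hi.trans_le hjc)
    rw [unary_of_mem_block (hstart ▸ hj₁) (hend ▸ hj₂), unary_of_mem_block hj₁ hj₂, hend]

theorem exists_unary_eqOn {t : ℕ → ℕ} :
    ∀ {L : ℕ}, (∀ i < L, t i ≤ 1) → ∃ f c, (blocks f).e c = L + 1 ∧ ∀ k < L, unary f k = t k
  | 0, _ => ⟨0, 1, by rw [blocks_succ, (blocks 0).zero]; rfl, fun k hk => absurd hk k.not_lt_zero⟩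
  | L + 1, ht => by
    obtain ⟨f, c, hfc, hft⟩ := exists_unary_eqOn fun i hi => ht i (Nat.lt_succ_of_lt hi)
    obtain ⟨d, rfl⟩ : ∃ d, c = d + 1 := Nat.exists_eq_succ_of_ne_zero fun h => by
      rw [h, (blocks f).zero] at hfc; omega
    have hd := blocks_succ f d
    rcases Nat.le_one_iff_eq_zero_or_eq_one.1 (ht L (Nat.lt_succ_self L)) with h0 | h1
    · -- append an empty block
      have hagree : ∀ j < d + 1, (Iio (d + 1)).piecewise f 0 j = f j :=
        fun j hj => piecewise_Iio_of_lt hj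
      refine ⟨(Iio (d + 1)).piecewise f 0, d + 2, ?_, fun k hk => ?_⟩
      · rw [blocks_succ, blocks_congr hagree, hfc,
          piecewise_Iio_of_not_lt ((lt_irrefl (d + 1)))]
        rfl
      rw [unary_eqOn_iff.2 hagree k (hfc ▸ hk)]
      rcases Nat.lt_succ_iff_lt_or_eq.1 hk with hk | rfl
      · exact hft k hk
      · rw [h0]; unfold unary; rw [if_pos ⟨d + 1, hfc⟩]
    · -- lengthen the last block by one
      have hagree : ∀ j < d, Function.update f d (f d + 1) j = f j :=
        fun j hj => Function.update_of_ne hj.ne _ _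
      have hstart := blocks_congr hagree
      have hend : (blocks (Function.update f d (f d + 1))).e (d + 1) = L + 2 := by
        rw [blocks_succ, hstart, Function.update_self]; omega
      refine ⟨Function.update f d (f d + 1), d + 1, hend, fun k hk => ?_⟩
      by_cases hkd : k < (blocks f).e d
      · rw [unary_eqOn_iff.2 hagree k hkd]; exact hft k (by omega)
      rw [unary_of_mem_block (j := d) (by omega) (by omega), if_neg (by omega)]
      rcases Nat.lt_succ_iff_lt_or_eq.1 hk with hk | rfl
      · rw [← hft k hk, unary_of_mem_block (j := d) (by omega) (by omega), if_neg (by omega)]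
      · exact h1.symm

theorem IsMeagre.isMeagreIn_image_unary {A : Set (ℕ → ℕ)} (hA : IsMeagre A) :
    IsMeagreIn 1 (unary '' A) := by
  obtain ⟨F, hF, hAF⟩ := hA.exists_isClosed_isNowhereDense_cover
  refine ⟨range fun m => unary '' F m, countable_range _, ?_, fun _ ⟨⟨y, hy, hyz⟩, _⟩ => ?_⟩
  · rintro _ ⟨m, rfl⟩ t ht L
    obtain ⟨f, c, hc, hft⟩ := exists_unary_eqOn (L := L) fun i _ => ht i
    obtain ⟨u, hu, d, hd, hdisj⟩ := (hF m).2.exists_disjoint_cylinder (hF m).1 f c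
    have hcode : ∀ k < (blocks f).e c, unary u k = unary f k := unary_eqOn_iff.2 hu
    have hud : L < (blocks u).e d :=
      calc L < (blocks u).e c := by rw [blocks_congr hu, hc]; exact Nat.lt_succ_self L
        _ ≤ (blocks u).e d := (blocks u).mono.monotone hd
    refine ⟨unary u, unary_le_one u, fun k hk => (hcode k (by omega)).trans (hft k hk),
      (blocks u).e d, hud.le, disjoint_left.2 ?_⟩
    rintro _ ⟨-, hz⟩ ⟨y, hyF, rfl⟩
    exact disjoint_left.1 hdisj (unary_eqOn_iff.1 hz) hyF
  · obtain ⟨m, hm⟩ := mem_iUnion.1 (hAF hy)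
    exact ⟨_, mem_range_self m, hyz ▸ mem_image_of_mem _ hm⟩

theorem IsMeagreIn.isMeagre_preimage_unary {W : Set (ℕ → ℕ)} (hW : IsMeagreIn 1 W) :
    IsMeagre (unary ⁻¹' W) := by
  obtain ⟨𝒞, h𝒞, hnwd, hW⟩ := hW
  rw [isMeagre_iff_countable_union_isNowhereDense]
  refine ⟨(unary ⁻¹' ·) '' 𝒞, ?_, h𝒞.image _, fun y hy => ?_⟩
  · rintro _ ⟨C, hC, rfl⟩
    refine isNowhereDense_of_exists_disjoint_cylinder fun s L => ?_
    obtain ⟨t, ht, hts, L', hL', hdisj⟩ := hnwd C hC (unary s) (unary_le_one s) ((blocks s).e L)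
    obtain ⟨f, c, hc, hft⟩ := exists_unary_eqOn (L := L') fun i _ => ht i
    refine ⟨f, unary_eqOn_iff.1 fun k hk => (hft k (by omega)).trans (hts k hk), c,
      disjoint_left.2 fun y hy hyC => disjoint_left.1 hdisj ⟨unary_le_one y, fun k hk => ?_⟩ hyC⟩
    exact (unary_eqOn_iff.2 hy k (by omega)).trans (hft k hk)
  · obtain ⟨C, hC, hyC⟩ := hW ⟨hy, unary_le_one y⟩
    exact ⟨_, mem_image_of_mem _ hC, hyC⟩

/-- `c` codes a start `a` and a binary word `l` such that `[a, l.length)` lies in the window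
`[T k, T (k + 1))`, and `z` differs from `l` somewhere there. -/
def DiffersFromBlock (T : ℕ → ℕ) (k c : ℕ) (z : ℕ → ℕ) : Prop :=
  let b := Denumerable.ofNat (ℕ × List ℕ) c
  T k ≤ b.1 ∧ b.2.length ≤ T (k + 1) ∧ (∀ v ∈ b.2, v ≤ 1) ∧
    ∃ i, b.1 ≤ i ∧ i < b.2.length ∧ z i ≠ b.2.getD i 0

def codedSet (T : IntPart) (q : IntPart × (ℕ → ℕ)) : Set (ℕ → ℕ) :=
  {z | ∀ᶠ m in atTop, ∃ k, q.1.e m ≤ k ∧ k < q.1.e (m + 1) ∧ DiffersFromBlock T.e k (q.2 k) z}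

theorem isMeagreIn_codedSet (T : IntPart) (q : IntPart × (ℕ → ℕ)) :
    IsMeagreIn 1 (codedSet T q) := by
  let C : ℕ → Set (ℕ → ℕ) := fun N =>
    {z | ∀ m ≥ N, ∃ k, q.1.e m ≤ k ∧ k < q.1.e (m + 1) ∧ DiffersFromBlock T.e k (q.2 k) z}
  refine ⟨range C, countable_range C, ?_, fun z ⟨hz, _⟩ => ?_⟩
  swap
  · obtain ⟨N, hN⟩ := eventually_atTop.1 hz
    exact mem_sUnion_of_mem (t := C N) hN (mem_range_self N)
  rintro _ ⟨N, rfl⟩ u hu L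
  choose idx hidx using T.exists_mem
  -- write on each window the binary word coded at its index
  let patch : ℕ → ℕ := fun i =>
    if i < L then u i else min ((Denumerable.ofNat (ℕ × List ℕ) (q.2 (idx i))).2.getD i 0) 1
  set m := max N L
  have hLm : L ≤ m := le_max_right _ _
  refine ⟨patch, fun i => ?_, fun i hi => if_pos hi, T.e (q.1.e (m + 1)), ?_,
    disjoint_left.2 fun z ⟨_, hz⟩ hzC => ?_⟩
  · simp only [patch]
    split_ifs
    · exact hu i
    · exact min_le_right _ _
  · have h₁ : m + 1 ≤ q.1.e (m + 1) := q.1.mono.id_le (m + 1)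
    have h₂ : q.1.e (m + 1) ≤ T.e (q.1.e (m + 1)) := T.mono.id_le _
    omega
  obtain ⟨k, hk₁, hk₂, ha, hlen, hbin, i, hi₁, hi₂, hne⟩ := hzC m (le_max_left _ _)
  have hTk : T.e k ≤ i := ha.trans hi₁
  have hiT : i < T.e (k + 1) := hi₂.trans_le hlen
  have hLi : L ≤ i := by
    have h₁ : m ≤ q.1.e m := q.1.mono.id_le m
    have h₂ : k ≤ T.e k := T.mono.id_le k
    omega
  have hi' : i < T.e (q.1.e (m + 1)) := hiT.trans_le (T.mono.monotone hk₂)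
  apply hne
  rw [hz i hi']
  simp only [patch, if_neg (not_lt.2 hLi), T.eq_of_mem (hidx i).1 (hidx i).2 hTk hiT]
  rw [List.getD_eq_getElem _ _ hi₂]
  exact min_eq_left (hbin _ (List.getElem_mem hi₂))

def windowScale (p : IntPart × (ℕ → ℕ)) : IntPart where
  e k := Nat.rec 0 (fun _ t => t + (Finset.range (p.1.e (t + 2))).sup p.2 + 1) k
  zero := rfl
  mono := strictMono_nat_of_lt_succ fun k => by simp only; omega

lemma windowScale_succ (p : IntPart × (ℕ → ℕ)) (k : ℕ) :
    (windowScale p).e (k + 1) =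
      (windowScale p).e k + (Finset.range (p.1.e ((windowScale p).e k + 2))).sup p.2 + 1 := rfl

lemma eventually_lt_windowScale {p : IntPart × (ℕ → ℕ)} {J : IntPart} (h : sqb p.1 J.e p.2) :
    ∀ᶠ k in atTop, J.e ((windowScale p).e k + 1) < (windowScale p).e (k + 1) := by
  obtain ⟨j₀, hj₀⟩ := eventually_atTop.1 h
  filter_upwards [eventually_ge_atTop j₀] with k hk
  have hkT : k ≤ (windowScale p).e k := (windowScale p).mono.id_le k
  obtain ⟨i, hi₁, hi₂, hJi⟩ := hj₀ ((windowScale p).e k + 1) (by omega)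
  calc J.e ((windowScale p).e k + 1)
      ≤ J.e (p.1.e ((windowScale p).e k + 1)) := J.mono.monotone (p.1.mono.id_le _)
    _ ≤ J.e i := J.mono.monotone hi₁
    _ = p.2 i := hJi
    _ ≤ (Finset.range (p.1.e ((windowScale p).e k + 2))).sup p.2 :=
      Finset.le_sup (Finset.mem_range.2 hi₂)
    _ < (windowScale p).e (k + 1) := by rw [windowScale_succ]; omega

theorem nonempty_seqTukey_mIdeal_romega :
    Nonempty (RelSys.SeqTukey (RelSys.ofFamily MIdeal) Romega) := by
  choose J x hx hJx using fun A : MIdeal => (IsMeagre.isMeagreIn_image_unary A.2).exists_intPart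
  let code : MIdeal → IntPart → ℕ → ℕ := fun A T k =>
    Encodable.encode ((J A).e (T.e k), (List.range ((J A).e (T.e k + 1))).map (x A))
  refine ⟨{
    first := fun A => (J A).e
    second := fun p A => code A (windowScale p)
    out := fun p q => ⟨unary ⁻¹' codedSet (windowScale p) q,
      (isMeagreIn_codedSet _ _).isMeagre_preimage_unary⟩
    spec := fun A p q hp hq y hy => ?_ }⟩
  obtain ⟨k₀, hk₀⟩ := eventually_atTop.1 (eventually_lt_windowScale hp)
  obtain ⟨n₀, hn₀⟩ := eventually_atTop.1 (hJx A (unary y) ⟨mem_image_of_mem _ hy, unary_le_one y⟩)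
  filter_upwards [hq, eventually_ge_atTop (max k₀ n₀)] with m ⟨k, hk₁, hk₂, hcode⟩ hm
  have hmk : m ≤ k := (q.1.mono.id_le m).trans hk₁
  have hkT : k ≤ (windowScale p).e k := (windowScale p).mono.id_le k
  obtain ⟨i, hi₁, hi₂, hne⟩ := hn₀ ((windowScale p).e k) (by omega)
  refine ⟨k, hk₁, hk₂, ?_⟩
  simp only [DiffersFromBlock, ← hcode, code, Denumerable.ofNat_encode, List.length_map,
    List.length_range]
  refine ⟨(J A).mono.id_le _, (hk₀ k (by omega)).le, ?_, i, hi₁, hi₂, ?_⟩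
  · simp only [List.mem_map, List.mem_range, forall_exists_index, and_imp]
    rintro _ j - rfl
    exact hx A j
  · rwa [List.getD_eq_getElem _ _ (by simpa using hi₂), List.getElem_map, List.getElem_range]

/-- `𝔟(R_ω) = add(M)` and `𝔡(R_ω) = cof(M)`. -/
theorem stmt11 : bnum Romega = addIdeal MIdeal ∧ dnum Romega = cofIdeal MIdeal := by
  have hMIdeal : ∀ A ∈ MIdeal, ∀ B ⊆ A, B ∈ MIdeal := fun _ hA _ hBA => IsMeagre.mono hBA hA
  obtain ⟨φ⟩ := nonempty_seqTukey_romega_mIdeal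
  obtain ⟨ψ⟩ := nonempty_seqTukey_mIdeal_romega
  rw [RelSys.addIdeal_eq_bnum_ofFamily hMIdeal, RelSys.cofIdeal_eq_dnum_ofFamily]
  exact ⟨le_antisymm (ψ.bnum_le ofFamily_mIdeal_isUnbounded_univ)
      (φ.bnum_le romega_isUnbounded_univ),
    le_antisymm (φ.dnum_le aleph0_le_dnum_ofFamily_mIdeal) (ψ.dnum_le aleph0_le_dnum_romega)⟩
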